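/- There exists an absolute constant c > 0 such that for every centered log-concave probability measure μ on ℝⁿ and every real p with 1 ≤ p ≤ n−1, I_{−p}(μ) ≥ c·√n / ‖μ‖_∞^{1/n}, where ‖μ‖_∞ = ‖f_μ‖_∞; in particular, for isotropic μ, I_{−p}(μ) ≥ c·√n / L_μ. -/

import Mathlib

open MeasureTheory Module Submodule
open scoped Pointwise ENNReal RealInnerProductSpace NNReal

noncomputable section

abbrev Euc (n : ℕ) : Type := EuclideanSpace ℝ (Fin n)

def IsLogConcave {n : ℕ} (μ : Measure (Euc n)) : Prop :=
  ∀ A B : Set (Euc n), MeasurableSet A → MeasurableSet B →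
    ∀ t : ℝ, 0 < t → t < 1 →
      μ A ^ t * μ B ^ (1 - t) ≤ μ (t • A + (1 - t) • B)

def IsCenteredM {n : ℕ} (μ : Measure (Euc n)) : Prop :=
  (∫ x, x ∂μ) = 0

def covM {n : ℕ} (μ : Measure (Euc n)) : Matrix (Fin n) (Fin n) ℝ :=
  Matrix.of fun i j => (∫ x, x i * x j ∂μ) - (∫ x, x i ∂μ) * (∫ x, x j ∂μ)

def IsIsotropicLC {n : ℕ} (μ : Measure (Euc n)) : Prop :=
  IsProbabilityMeasure μ ∧ IsCenteredM μ ∧ IsLogConcave μ ∧ covM μ = 1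

def densitySup {n : ℕ} (μ : Measure (Euc n)) : ℝ≥0∞ :=
  essSup (μ.rnDeriv volume) volume

def isoConst {n : ℕ} (μ : Measure (Euc n)) : ℝ :=
  (densitySup μ).toReal ^ ((n : ℝ)⁻¹)

def Lconst (n : ℕ) : ℝ :=
  sSup {L : ℝ | ∃ μ : Measure (Euc n), IsIsotropicLC μ ∧ L = isoConst μ}

def marg {n : ℕ} (μ : Measure (Euc n)) (E : Submodule ℝ (Euc n)) :
    Measure (Euc (finrank ℝ E)) :=
  Measure.map (fun x => (stdOrthonormalBasis ℝ E).repr (orthogonalProjection E x)) μ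

def Iq {n : ℕ} (μ : Measure (Euc n)) (q : ℝ) : ℝ :=
  (∫ x, ‖x‖ ^ q ∂μ) ^ q⁻¹

def qminusc {m : ℕ} (μ : Measure (Euc m)) (δ : ℝ) : ℝ :=
  if m = 1 then 1
  else sSup {p : ℝ | 1 ≤ p ∧ p ≤ (m : ℝ) - 1 ∧ δ⁻¹ * Real.sqrt m ≤ Iq μ (-p)}

def qminuscH {n : ℕ} (μ : Measure (Euc n)) (δ : ℝ) : ℝ :=
  (n : ℝ) * sInf {r : ℝ | ∃ E : Submodule ℝ (Euc n), 1 ≤ finrank ℝ E ∧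
    r = (⌊qminusc (marg μ E) δ⌋ : ℝ) / (finrank ℝ E : ℝ)}

def rsharp {m : ℕ} (μ : Measure (Euc m)) (A : ℝ) : ℕ :=
  if m = 1 then 1
  else sSup {s : ℕ | 1 ≤ s ∧ s ≤ m - 1 ∧
    ∃ F : Submodule ℝ (Euc m), finrank ℝ F = s ∧ isoConst (marg μ F) ≤ A}

def rsharpH {n : ℕ} (μ : Measure (Euc n)) (A : ℝ) : ℝ :=
  (n : ℝ) * sInf {r : ℝ | ∃ E : Submodule ℝ (Euc n), 1 ≤ finrank ℝ E ∧
    r = (rsharp (marg μ E) A : ℝ) / (finrank ℝ E : ℝ)}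

def centroidBody {m : ℕ} (μ : Measure (Euc m)) (p : ℝ) : Set (Euc m) :=
  {z | ∀ y : Euc m, ⟪z, y⟫ ≤ (∫ x, |⟪x, y⟫| ^ p ∂μ) ^ p⁻¹}

def centroidVol {m : ℕ} (μ : Measure (Euc m)) (p : ℝ) : ℝ :=
  (volume (centroidBody μ p)).toReal ^ ((m : ℝ)⁻¹)

def lapInt {m : ℕ} (μ : Measure (Euc m)) (ξ : Euc m) : ℝ≥0∞ :=
  ∫⁻ x, ENNReal.ofReal (Real.exp ⟪x, ξ⟫) ∂μ

def LambdaBody {m : ℕ} (μ : Measure (Euc m)) (p : ℝ) : Set (Euc m) :=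
  {x | lapInt μ x ≤ ENNReal.ofReal (Real.exp p) ∧ lapInt μ (-x) ≤ ENNReal.ofReal (Real.exp p)}

def tiltedM {m : ℕ} (μ : Measure (Euc m)) (x : Euc m) : Measure (Euc m) :=
  μ.tilted fun z => ⟪z, x⟫

def centeredTilt {m : ℕ} (μ : Measure (Euc m)) (x : Euc m) : Measure (Euc m) :=
  Measure.map (fun z => z - ∫ w, w ∂(tiltedM μ x)) (tiltedM μ x)

def stdGaussianE (n : ℕ) : Measure (Euc n) :=
  Measure.map (⇑(EuclideanSpace.equiv (Fin n) ℝ).symm)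
    (Measure.pi fun _ : Fin n => ProbabilityTheory.gaussianReal 0 1)

/-!
If the density of a log-concave measure `μ` has essential supremum `0 < D < ∞`, then `μ` has no
singular part, so `μ(B(0,s)) ≤ D |B(0,s)| ≤ D (5s/√n)^n`. Splitting `ℝⁿ` into the dyadic shells
`R 2^{-k-1} < ‖x‖ ≤ R 2^{-k}` then bounds `∫ ‖x‖^{-p} dμ` by a geometric series of ratio
`2^{p-n} ≤ 1/2`, which gives `I_{-p}(μ) ≥ √n / (40 D^{1/n})`.
-/

section

open Real Metric Filter Topology

theorem measure_le_essSup_rnDeriv_mul {α : Type*} [MeasurableSpace α] {μ ν : Measure α}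
    [μ.HaveLebesgueDecomposition ν] [SFinite ν] (h : μ ≪ ν) (s : Set α) :
    μ s ≤ essSup (μ.rnDeriv ν) ν * ν s := calc
  μ s = ∫⁻ x in s, μ.rnDeriv ν x ∂ν := by
    conv_lhs => rw [← Measure.withDensity_rnDeriv_eq μ ν h]
    exact withDensity_apply' _ s
  _ ≤ ∫⁻ _ in s, essSup (μ.rnDeriv ν) ν ∂ν :=
    lintegral_mono_ae (ae_restrict_of_ae (ENNReal.ae_le_essSup _))
  _ = essSup (μ.rnDeriv ν) ν * ν s := setLIntegral_const s _

theorem exists_eventually_lt_measure_closedBall_of_not_absolutelyContinuous {β : Type*}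
    [MetricSpace β] [MeasurableSpace β] [BorelSpace β] [SecondCountableTopology β]
    [HasBesicovitchCovering β] {μ ν : Measure β} [IsLocallyFiniteMeasure μ]
    [IsLocallyFiniteMeasure ν] (h : ¬ μ ≪ ν) {M : ℝ≥0∞} (hM : M ≠ ∞) :
    ∃ x, ∀ᶠ r in 𝓝[>] 0, M * ν (closedBall x r) < μ (closedBall x r) := by
  obtain ⟨s, hsν, hsμ⟩ : ∃ s, ν s = 0 ∧ μ s ≠ 0 := by
    contrapose! h
    exact Measure.AbsolutelyContinuous.mk fun s _ hs => h s hs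
  by_contra! hfreq
  -- the differentiation theorem for `μ` along the Besicovitch family gives `μ s ≤ M ν s = 0`
  have hle := (Besicovitch.vitaliFamily μ).measure_le_of_frequently_le (M.toNNReal • ν)
    Measure.AbsolutelyContinuous.rfl s fun x _ =>
      ((Besicovitch.tendsto_filterAt μ x).frequently (hfreq x)).mono fun a ha => by
        rwa [Measure.smul_apply, ENNReal.smul_def, smul_eq_mul, ENNReal.coe_toNNReal hM]
  rw [Measure.smul_apply, hsν, smul_zero] at hle
  exact hsμ (nonpos_iff_eq_zero.1 hle)

theorem ae_midpoint_of_ae {E : Type*} [NormedAddCommGroup E] [NormedSpace ℝ E] [MeasurableSpace E]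
    [BorelSpace E] [FiniteDimensional ℝ E] (μ : Measure E) [μ.IsAddHaarMeasure] {P : E → Prop}
    (h : ∀ᵐ y ∂μ, P y) (x : E) : ∀ᵐ y ∂μ, P (midpoint ℝ x y) := by
  rw [ae_iff] at h ⊢
  have : {y | ¬P (midpoint ℝ x y)} = (x + ·) ⁻¹' ((⅟2 : ℝ) • ·) ⁻¹' {y | ¬P y} := by
    ext y; simp [midpoint_eq_smul_add]
  rw [this, measure_preimage_add, Measure.addHaar_preimage_smul _ (by norm_num), h, mul_zero]

theorem volume_closedBall_le_exp_mul_gaussian {V : Type*} [NormedAddCommGroup V]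
    [InnerProductSpace ℝ V] [FiniteDimensional ℝ V] [MeasurableSpace V] [BorelSpace V]
    {b : ℝ} (hb : 0 < b) (s : ℝ) :
    volume (closedBall (0 : V) s) ≤
      ENNReal.ofReal (exp (b * s ^ 2) * (π / b) ^ (finrank ℝ V / 2 : ℝ)) := by
  have hgauss := GaussianFourier.integral_rexp_neg_mul_sq_norm (V := V) hb
  have hint : Integrable fun v : V => exp (b * s ^ 2) * exp (-b * ‖v‖ ^ 2) :=
    (Integrable.of_integral_ne_zero (by rw [hgauss]; positivity)).const_mul _
  calc volume (closedBall (0 : V) s) = ∫⁻ _ in closedBall (0 : V) s, 1 := by simp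
    _ ≤ ∫⁻ v in closedBall (0 : V) s, ENNReal.ofReal (exp (b * s ^ 2) * exp (-b * ‖v‖ ^ 2)) := by
        refine setLIntegral_mono' measurableSet_closedBall fun v hv => ?_
        rw [← exp_add, ENNReal.one_le_ofReal, one_le_exp_iff]
        have : ‖v‖ ^ 2 ≤ s ^ 2 := pow_le_pow_left₀ (norm_nonneg v) (mem_closedBall_zero_iff.1 hv) 2
        nlinarith
    _ ≤ ∫⁻ v, ENNReal.ofReal (exp (b * s ^ 2) * exp (-b * ‖v‖ ^ 2)) := setLIntegral_le_lintegral _ _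
    _ = _ := by
        rw [← ofReal_integral_eq_lintegral_ofReal hint (.of_forall fun _ => by positivity),
          integral_const_mul, hgauss]

theorem volume_closedBall_le {V : Type*} [NormedAddCommGroup V]
    [InnerProductSpace ℝ V] [FiniteDimensional ℝ V] [MeasurableSpace V] [BorelSpace V]
    (hV : 0 < finrank ℝ V) {s : ℝ} (hs : 0 < s) :
    volume (closedBall (0 : V) s) ≤ ENNReal.ofReal ((5 / √(finrank ℝ V) * s) ^ finrank ℝ V) := by
  set d : ℝ := (finrank ℝ V : ℝ)
  have hd : 0 < d := Nat.cast_pos.2 hV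
  -- optimizing `b` in the Chernoff-type bound gives `(2πe s² / d) ^ (d / 2)`, and `2πe ≤ 25`
  refine (volume_closedBall_le_exp_mul_gaussian (b := d / (2 * s ^ 2)) (by positivity) s).trans
    (ENNReal.ofReal_le_ofReal ?_)
  have hexp : exp (d / (2 * s ^ 2) * s ^ 2) = exp 1 ^ (d / 2) := by
    rw [← exp_mul]; congr 1; field_simp
  have hbase : exp 1 * (π / (d / (2 * s ^ 2))) ≤ (5 / √d * s) ^ 2 := by
    have h2πe : exp 1 * (2 * π) ≤ 25 := by
      nlinarith [exp_one_lt_d9, pi_lt_d2, exp_pos 1, pi_pos]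
    rw [mul_pow, div_pow, sq_sqrt hd.le]
    calc exp 1 * (π / (d / (2 * s ^ 2))) = exp 1 * (2 * π) * (s ^ 2 / d) := by field_simp
      _ ≤ 25 * (s ^ 2 / d) := by gcongr
      _ = 5 ^ 2 / d * s ^ 2 := by ring
  calc exp (d / (2 * s ^ 2) * s ^ 2) * (π / (d / (2 * s ^ 2))) ^ (d / 2)
      = (exp 1 * (π / (d / (2 * s ^ 2)))) ^ (d / 2) := by
        rw [hexp, mul_rpow (exp_pos 1).le (by positivity)]
    _ ≤ ((5 / √d * s) ^ 2) ^ (d / 2) := by gcongr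
    _ = (5 / √d * s) ^ finrank ℝ V := by
        rw [← rpow_natCast _ 2, ← rpow_mul (by positivity), ← rpow_natCast]
        congr 1; push_cast; ring

theorem ofReal_norm_rpow_neg_le_tsum {E : Type*} [NormedAddCommGroup E] {R p : ℝ} (hR : 0 < R)
    (hp : 0 < p) (x : E) :
    ENNReal.ofReal (‖x‖ ^ (-p)) ≤ ENNReal.ofReal (R ^ (-p)) +
      ∑' k : ℕ, (closedBall 0 (R / 2 ^ k)).indicator
        (fun _ => ENNReal.ofReal ((R / 2 ^ (k + 1)) ^ (-p))) x := by
  rcases eq_or_ne x 0 with rfl | hx0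
  · simp [Real.zero_rpow (neg_ne_zero.2 hp.ne')]
  have hx : 0 < ‖x‖ := norm_pos_iff.2 hx0
  rcases lt_or_ge R ‖x‖ with hRx | hxR
  · exact le_add_right (ENNReal.ofReal_le_ofReal
      (Real.rpow_le_rpow_of_nonpos hR hRx.le (neg_nonpos.2 hp.le)))
  obtain ⟨k, hk, hk'⟩ := exists_nat_pow_near ((one_le_div hx).2 hxR) one_lt_two
  have hmem : x ∈ closedBall 0 (R / 2 ^ k) := by
    rw [mem_closedBall_zero_iff, le_div_iff₀ (by positivity), mul_comm]
    exact (le_div_iff₀ hx).1 hk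
  have hshell : R / 2 ^ (k + 1) < ‖x‖ := by
    rw [div_lt_iff₀ (by positivity), mul_comm]
    exact (div_lt_iff₀ hx).1 hk'
  refine le_add_left (le_trans ?_ (ENNReal.le_tsum k))
  rw [Set.indicator_of_mem hmem]
  exact ENNReal.ofReal_le_ofReal
    (Real.rpow_le_rpow_of_nonpos (by positivity) hshell.le (neg_nonpos.2 hp.le))

theorem tsum_rpow_neg_mul_measure_closedBall_le {E : Type*} [NormedAddCommGroup E]
    [MeasurableSpace E] {μ : Measure E} {n : ℕ} {R p : ℝ} (hR : 0 < R) (hpn : p ≤ n - 1)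
    (hball : ∀ s, 0 < s → μ (closedBall 0 s) ≤ ENNReal.ofReal ((s / R) ^ n)) :
    ∑' k : ℕ, ENNReal.ofReal ((R / 2 ^ (k + 1)) ^ (-p)) * μ (closedBall 0 (R / 2 ^ k)) ≤
      ENNReal.ofReal (R ^ (-p) * 2 ^ p) * 2 := by
  set q : ℝ := 2 ^ p
  have hterm (k : ℕ) : ENNReal.ofReal ((R / 2 ^ (k + 1)) ^ (-p)) * μ (closedBall 0 (R / 2 ^ k)) ≤
      ENNReal.ofReal (R ^ (-p) * q) * ENNReal.ofReal (q / 2 ^ n) ^ k := by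
    have hrad : (R / 2 ^ (k + 1)) ^ (-p) = R ^ (-p) * q ^ (k + 1) := by
      rw [Real.div_rpow hR.le (by positivity), ← Real.rpow_pow_comm zero_le_two,
        Real.rpow_neg zero_le_two, inv_pow, div_inv_eq_mul]
    calc _ ≤ ENNReal.ofReal ((R / 2 ^ (k + 1)) ^ (-p)) * ENNReal.ofReal ((R / 2 ^ k / R) ^ n) := by
          gcongr; exact hball _ (by positivity)
      _ = ENNReal.ofReal (R ^ (-p) * q * (q / 2 ^ n) ^ k) := by
          rw [← ENNReal.ofReal_mul (by positivity), hrad]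
          congr 1
          field_simp
          ring
      _ = _ := by rw [ENNReal.ofReal_mul (by positivity), ENNReal.ofReal_pow (by positivity)]
  have hratio : ENNReal.ofReal (q / 2 ^ n) ≤ 2⁻¹ := by
    have : q ≤ 2 ^ n / 2 := calc
      q ≤ 2 ^ ((n : ℝ) - 1) := Real.rpow_le_rpow_of_exponent_le one_le_two hpn
      _ = 2 ^ n / 2 := by rw [Real.rpow_sub two_pos, Real.rpow_natCast, Real.rpow_one]
    rw [← ENNReal.ofReal_ofNat 2, ← ENNReal.ofReal_inv_of_pos two_pos]
    exact ENNReal.ofReal_le_ofReal (by rw [div_le_iff₀ (by positivity)]; linarith)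
  have hgeom : ∑' k : ℕ, ENNReal.ofReal (q / 2 ^ n) ^ k ≤ 2 := by
    rw [ENNReal.tsum_geometric, ← inv_inv (2 : ℝ≥0∞)]
    refine ENNReal.inv_le_inv' ?_
    calc (2 : ℝ≥0∞)⁻¹ = 1 - 2⁻¹ := ENNReal.one_sub_inv_two.symm
      _ ≤ 1 - ENNReal.ofReal (q / 2 ^ n) := by gcongr
  grw [ENNReal.tsum_le_tsum hterm, ENNReal.tsum_mul_left, hgeom]

theorem lintegral_ofReal_norm_rpow_neg_le {E : Type*} [NormedAddCommGroup E] [MeasurableSpace E]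
    [OpensMeasurableSpace E] {μ : Measure E} [IsProbabilityMeasure μ] {n : ℕ} {R p : ℝ}
    (hR : 0 < R) (hp : 1 ≤ p) (hpn : p ≤ n - 1)
    (hball : ∀ s, 0 < s → μ (closedBall 0 s) ≤ ENNReal.ofReal ((s / R) ^ n)) :
    ∫⁻ x, ENNReal.ofReal (‖x‖ ^ (-p)) ∂μ ≤ ENNReal.ofReal ((8 / R) ^ p) := by
  have hconst : 1 + 2 ^ p * 2 ≤ (8 : ℝ) ^ p := by
    have h2 : 2 ≤ (2 : ℝ) ^ p := by simpa using Real.rpow_le_rpow_of_exponent_le one_le_two hp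
    have h4 : 4 ≤ (4 : ℝ) ^ p := by simpa using Real.rpow_le_rpow_of_exponent_le (by norm_num) hp
    have h8 : (8 : ℝ) ^ p = 2 ^ p * 4 ^ p := by
      rw [← Real.mul_rpow zero_le_two (by norm_num)]; norm_num
    nlinarith
  have hmeas (k : ℕ) : Measurable ((closedBall (0 : E) (R / 2 ^ k)).indicator
      fun _ => ENNReal.ofReal ((R / 2 ^ (k + 1)) ^ (-p))) :=
    measurable_const.indicator measurableSet_closedBall
  calc ∫⁻ x, ENNReal.ofReal (‖x‖ ^ (-p)) ∂μ
      ≤ ∫⁻ x, (ENNReal.ofReal (R ^ (-p)) + ∑' k : ℕ, (closedBall 0 (R / 2 ^ k)).indicator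
          (fun _ => ENNReal.ofReal ((R / 2 ^ (k + 1)) ^ (-p))) x) ∂μ :=
        lintegral_mono fun x => ofReal_norm_rpow_neg_le_tsum hR (by linarith) x
    _ = ENNReal.ofReal (R ^ (-p)) + ∑' k : ℕ,
          ENNReal.ofReal ((R / 2 ^ (k + 1)) ^ (-p)) * μ (closedBall 0 (R / 2 ^ k)) := by
        rw [lintegral_add_left measurable_const, lintegral_tsum fun k => (hmeas k).aemeasurable]
        simp [lintegral_indicator_const measurableSet_closedBall]
    _ ≤ ENNReal.ofReal (R ^ (-p)) + ENNReal.ofReal (R ^ (-p) * 2 ^ p) * 2 := by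
        grw [tsum_rpow_neg_mul_measure_closedBall_le hR hpn hball]
    _ = ENNReal.ofReal (R ^ (-p) * (1 + 2 ^ p * 2)) := by
        rw [← ENNReal.ofReal_ofNat 2, ← ENNReal.ofReal_mul (by positivity),
          ← ENNReal.ofReal_add (by positivity) (by positivity)]
        ring_nf
    _ ≤ ENNReal.ofReal ((8 / R) ^ p) := by
        refine ENNReal.ofReal_le_ofReal ?_
        rw [Real.div_rpow (by norm_num) hR.le, div_eq_mul_inv, ← Real.rpow_neg hR.le, mul_comm]
        gcongr

theorem IsLogConcave.measure_closedBall_mul_le {n : ℕ} {μ : Measure (Euc n)} (hμ : IsLogConcave μ)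
    (x y : Euc n) {r : ℝ} (hr : 0 ≤ r) :
    μ (closedBall x r) * μ (closedBall y r) ≤ μ (closedBall (midpoint ℝ x y) r) ^ 2 := by
  have hsum : (2⁻¹ : ℝ) • closedBall x r + (1 - 2⁻¹ : ℝ) • closedBall y r =
      closedBall (midpoint ℝ x y) r := by
    rw [show (1 - 2⁻¹ : ℝ) = 2⁻¹ by norm_num, smul_closedBall _ _ hr, smul_closedBall _ _ hr,
      closedBall_add_closedBall (by positivity) (by positivity), midpoint_eq_smul_add, smul_add]
    norm_num
    ring_nf
  have h := hμ (closedBall x r) (closedBall y r) measurableSet_closedBall measurableSet_closedBall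
    2⁻¹ (by norm_num) (by norm_num)
  rw [hsum, show (1 - 2⁻¹ : ℝ) = 2⁻¹ by norm_num,
    ← ENNReal.mul_rpow_of_nonneg _ _ (by norm_num), ENNReal.rpow_inv_le_iff (by norm_num)] at h
  exact_mod_cast h

theorem IsLogConcave.ratio_mul_ratio_le_sq {n : ℕ} {μ : Measure (Euc n)} (hμ : IsLogConcave μ)
    (x y : Euc n) {r : ℝ} (hr : 0 < r) :
    μ (closedBall x r) / volume (closedBall x r) * (μ (closedBall y r) / volume (closedBall y r)) ≤
      (μ (closedBall (midpoint ℝ x y) r) / volume (closedBall (midpoint ℝ x y) r)) ^ 2 := by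
  simp only [Measure.addHaar_closedBall_center (volume : Measure (Euc n)) _ r]
  set V := volume (closedBall (0 : Euc n) r)
  have hV0 : V ≠ 0 := (measure_closedBall_pos _ _ hr).ne'
  have hVtop : V ≠ ⊤ := measure_closedBall_lt_top.ne
  rw [div_eq_mul_inv, div_eq_mul_inv, div_eq_mul_inv, mul_pow, mul_mul_mul_comm, ← pow_two]
  gcongr
  exact hμ.measure_closedBall_mul_le x y hr.le

theorem IsLogConcave.absolutelyContinuous {n : ℕ} {μ : Measure (Euc n)} [IsLocallyFiniteMeasure μ]
    (hμ : IsLogConcave μ) (h0 : densitySup μ ≠ 0) (htop : densitySup μ ≠ ∞) :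
    μ ≪ volume := by
  by_contra hac
  set D := densitySup μ
  set f := μ.rnDeriv volume
  set E := D / 2
  have hE0 : E ≠ 0 := (ENNReal.half_pos h0).ne'
  have hEtop : E ≠ ∞ := ENNReal.div_ne_top htop two_ne_zero
  have hDE : D = 2 * E := (ENNReal.mul_div_cancel two_ne_zero ENNReal.ofNat_ne_top).symm
  -- a point where `μ` has density `≥ 8 E` in the limit, a point where it has density `> E`,
  -- and their midpoint, where it has density `≤ D = 2 E`: this contradicts log-concavity
  obtain ⟨x₀, hx₀⟩ := exists_eventually_lt_measure_closedBall_of_not_absolutelyContinuous hac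
    (ENNReal.mul_ne_top ENNReal.ofNat_ne_top hEtop : 8 * E ≠ ∞)
  set G := {y | Tendsto (fun r => μ (closedBall y r) / volume (closedBall y r)) (𝓝[>] 0) (𝓝 (f y))
    ∧ f y ≤ D}
  have hG : ∀ᵐ y, y ∈ G := (Besicovitch.ae_tendsto_rnDeriv μ volume).and (ENNReal.ae_le_essSup f)
  obtain ⟨y, hyE, hyG, hmG⟩ : ∃ y, E < f y ∧ y ∈ G ∧ midpoint ℝ x₀ y ∈ G := by
    have hlarge : volume {y | E < f y} ≠ 0 := fun h => (ENNReal.half_lt_self h0 htop).not_ge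
      (essSup_le_of_ae_le _ (by simpa [EventuallyLE, ae_iff] using h))
    have : NeBot (ae (volume.restrict {y | E < f y})) := by
      rwa [ae_neBot, Ne, Measure.restrict_eq_zero]
    have hmeas : MeasurableSet {y | E < f y} :=
      measurableSet_lt measurable_const (Measure.measurable_rnDeriv _ _)
    exact ((ae_restrict_mem hmeas).and
      (ae_restrict_of_ae (hG.and (ae_midpoint_of_ae volume hG x₀)))).exists
  have hev : ∀ᶠ r in 𝓝[>] 0, 8 * E * E ≤
      (μ (closedBall (midpoint ℝ x₀ y) r) / volume (closedBall (midpoint ℝ x₀ y) r)) ^ 2 := by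
    filter_upwards [hx₀, hyG.1.eventually_const_lt hyE, self_mem_nhdsWithin] with r hx hy hr
    have hV0 : volume (closedBall x₀ r) ≠ 0 := (measure_closedBall_pos _ _ hr).ne'
    have hVtop : volume (closedBall x₀ r) ≠ ∞ := measure_closedBall_lt_top.ne
    calc 8 * E * E ≤ μ (closedBall x₀ r) / volume (closedBall x₀ r) *
          (μ (closedBall y r) / volume (closedBall y r)) := by
          gcongr
          exact ((ENNReal.lt_div_iff_mul_lt (.inl hV0) (.inl hVtop)).2 hx).le
      _ ≤ _ := hμ.ratio_mul_ratio_le_sq x₀ y hr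
  have h8 : 8 * (E * E) ≤ 4 * (E * E) := calc
    8 * (E * E) = 8 * E * E := by ring
    _ ≤ f (midpoint ℝ x₀ y) ^ 2 := ge_of_tendsto (ENNReal.Tendsto.pow hmG.1) hev
    _ ≤ D ^ 2 := by gcongr; exact hmG.2
    _ = 4 * (E * E) := by rw [hDE]; ring
  have := (ENNReal.mul_le_mul_iff_left (mul_ne_zero hE0 hE0) (ENNReal.mul_ne_top hEtop hEtop)).1 h8
  norm_num at this

theorem Iq_nonneg {n : ℕ} (μ : Measure (Euc n)) (q : ℝ) : 0 ≤ Iq μ q :=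
  Real.rpow_nonneg (integral_nonneg fun _ => by positivity) _

theorem inv_le_Iq_neg {n : ℕ} {μ : Measure (Euc n)} [IsProbabilityMeasure μ] (h0 : μ {0} = 0)
    {p B : ℝ} (hp : 0 < p) (hB : 0 < B)
    (h : ∫⁻ x, ENNReal.ofReal (‖x‖ ^ (-p)) ∂μ ≤ ENNReal.ofReal (B ^ p)) :
    B⁻¹ ≤ Iq μ (-p) := by
  have hnonneg : 0 ≤ fun x : Euc n => ‖x‖ ^ (-p) := fun x => by positivity
  have hint : Integrable (fun x : Euc n => ‖x‖ ^ (-p)) μ :=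
    ⟨(measurable_norm.pow_const _).aestronglyMeasurable,
      (hasFiniteIntegral_iff_ofReal (.of_forall hnonneg)).2 (h.trans_lt ENNReal.ofReal_lt_top)⟩
  have hpos : 0 < ∫ x, ‖x‖ ^ (-p) ∂μ := by
    rw [integral_pos_iff_support_of_nonneg hnonneg hint]
    calc (0 : ℝ≥0∞) < μ {0}ᶜ := by
          rw [measure_compl (measurableSet_singleton 0) (measure_ne_top μ _), h0]; simp
      _ ≤ μ (Function.support fun x : Euc n => ‖x‖ ^ (-p)) :=
          measure_mono fun x hx => (Real.rpow_pos_of_pos (norm_pos_iff.2 hx) _).ne'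
  have hle : ∫ x, ‖x‖ ^ (-p) ∂μ ≤ B ^ p := by
    rw [← ENNReal.ofReal_le_ofReal_iff (by positivity),
      ofReal_integral_eq_lintegral_ofReal hint (.of_forall hnonneg)]
    exact h
  calc B⁻¹ = (B ^ p) ^ (-p)⁻¹ := by
        rw [← Real.rpow_mul hB.le, inv_neg, mul_neg, mul_inv_cancel₀ hp.ne', Real.rpow_neg_one]
    _ ≤ Iq μ (-p) := Real.rpow_le_rpow_of_nonpos hpos hle (by simpa using hp.le)

theorem sqrt_div_le_Iq_neg {n : ℕ} {μ : Measure (Euc n)} [IsProbabilityMeasure μ]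
    (hac : μ ≪ volume) (hD : 0 < (densitySup μ).toReal) {p : ℝ} (hp : 1 ≤ p)
    (hpn : p ≤ n - 1) :
    √n / (40 * (densitySup μ).toReal ^ (n : ℝ)⁻¹) ≤ Iq μ (-p) := by
  set D := (densitySup μ).toReal
  have hn : 0 < n := by exact_mod_cast (show (0 : ℝ) < n by linarith)
  have hDn : (D ^ (n : ℝ)⁻¹) ^ n = D := by
    rw [← Real.rpow_natCast, ← Real.rpow_mul hD.le, inv_mul_cancel₀ (by positivity), Real.rpow_one]
  set R := √n / (5 * D ^ (n : ℝ)⁻¹) with hR_def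
  have hR : 0 < R := by positivity
  have hball (s : ℝ) (hs : 0 < s) : μ (closedBall 0 s) ≤ ENNReal.ofReal ((s / R) ^ n) := calc
    μ (closedBall 0 s) ≤ densitySup μ * volume (closedBall (0 : Euc n) s) :=
      measure_le_essSup_rnDeriv_mul hac _
    _ ≤ ENNReal.ofReal D * ENNReal.ofReal ((5 / √n * s) ^ n) := by
      rw [ENNReal.ofReal_toReal (ENNReal.toReal_pos_iff.1 hD).2.ne]
      gcongr
      simpa using volume_closedBall_le (V := Euc n) (by simpa using hn) hs
    _ = ENNReal.ofReal ((s / R) ^ n) := by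
      rw [← ENNReal.ofReal_mul hD.le]
      congr 1
      rw [← hDn, ← mul_pow]
      congr 1
      rw [hR_def]
      field_simp
  have h0 : μ {0} = 0 := by
    have : Nontrivial (Euc n) := Module.nontrivial_of_finrank_pos (R := ℝ) (by simpa using hn)
    exact hac (measure_singleton 0)
  calc √n / (40 * D ^ (n : ℝ)⁻¹) = (8 / R)⁻¹ := by
        rw [hR_def]; field_simp; ring
    _ ≤ Iq μ (-p) := inv_le_Iq_neg h0 (by linarith) (by positivity)
        (lintegral_ofReal_norm_rpow_neg_le hR hp hpn hball)

end

/-- `I_{−p}(μ) ≥ c·√n/‖μ‖_∞^{1/n}` for centered log-concave probability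
measures and real `1 ≤ p ≤ n−1`; in particular `I_{−p}(μ) ≥ c·√n/L_μ` for isotropic μ. -/
theorem stmt14 :
    ∃ c : ℝ, 0 < c ∧
      ∀ (n : ℕ) (μ : Measure (Euc n)), IsProbabilityMeasure μ → IsCenteredM μ →
        IsLogConcave μ →
        ∀ p : ℝ, 1 ≤ p → p ≤ (n : ℝ) - 1 →
          c * Real.sqrt n / (densitySup μ).toReal ^ ((n : ℝ)⁻¹) ≤ Iq μ (-p) ∧
          (IsIsotropicLC μ → c * Real.sqrt n / isoConst μ ≤ Iq μ (-p)) := by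
  refine ⟨40⁻¹, by norm_num, fun n μ _ _ hlc p hp hpn => ?_⟩
  have key : 40⁻¹ * √n / (densitySup μ).toReal ^ (n : ℝ)⁻¹ ≤ Iq μ (-p) := by
    rcases (ENNReal.toReal_nonneg (a := densitySup μ)).eq_or_lt with hD | hD
    · -- `densitySup μ` is `0` or `∞`, and the left-hand side is `0`
      rw [← hD, Real.zero_rpow (inv_ne_zero (by linarith)), div_zero]
      exact Iq_nonneg μ _
    obtain ⟨h0, htop⟩ := ENNReal.toReal_pos_iff.1 hD
    have hac := hlc.absolutelyContinuous h0.ne' htop.ne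
    rw [inv_mul_eq_div, div_div]
    exact sqrt_div_le_Iq_neg hac hD hp hpn
  exact ⟨key, fun _ => key⟩

end
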